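/- If a Banach space X has property Q, then the family of interlaced graphs ([ℕ]^k, d_K) for k ∈ ℕ does not equi-coarsely embed into X. -/
import Mathlib


open Filter Finset

/-- The interlacing graph distance: `d_K(n,m) = sup { | |n ∩ S| - |m ∩ S| | : S a segment of ℕ }`. -/
noncomputable def dseg (n m : Finset ℕ) : ℕ :=
  ⨆ a : ℕ, ⨆ b : ℕ,
    (((n ∩ Finset.Icc a b).card : ℤ) - ((m ∩ Finset.Icc a b).card : ℤ)).natAbs

/-- The vertex set `[ℕ]^k`. -/
def Vk (k : ℕ) := {s : Finset ℕ // s.card = k}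

/-- Property `Q` of Kalton: there is `C ≥ 1` such that every `L`-Lipschitz map
`f : ([ℕ]^k, d_K) → X` concentrates on some `[M]^k`, `M ⊆ ℕ` infinite, with constant `C·L`.
(Here `ω_f(1)`, the least Lipschitz constant of `f` for a graph distance, is replaced by an
arbitrary Lipschitz constant `L` of `f`.) -/
def PropertyQ (X : Type*) [NormedAddCommGroup X] [NormedSpace ℝ X] : Prop :=
  ∃ C : ℝ, 1 ≤ C ∧
    ∀ (k : ℕ) (f : Vk k → X) (L : ℝ), 0 ≤ L →
      (∀ n m : Vk k, ‖f n - f m‖ ≤ L * dseg n.1 m.1) →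
      ∃ M : Set ℕ, M.Infinite ∧
        ∀ n m : Vk k, ↑n.1 ⊆ M → ↑m.1 ⊆ M → ‖f n - f m‖ ≤ C * L

/-- The family `([ℕ]^k, d_K)_k` equi-coarsely embeds into `X`: there are maps
`f_k : [ℕ]^k → X` and functions `ρ, ω` with `ρ(t) → ∞`, such that
`ρ(t) ≤ ρ_{f_k}(t)` and `ω_{f_k}(t) ≤ ω(t)` for all `k` and `t`. -/
def EquiCoarseKalton (X : Type*) [NormedAddCommGroup X] [NormedSpace ℝ X] : Prop :=
  ∃ (ρ ω : ℝ → ℝ) (f : ∀ k : ℕ, Vk k → X),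
    Tendsto ρ atTop atTop ∧
    (∀ (k : ℕ) (n m : Vk k) (t : ℝ), (dseg n.1 m.1 : ℝ) ≤ t → ‖f k n - f k m‖ ≤ ω t) ∧
    (∀ (k : ℕ) (n m : Vk k) (t : ℝ), t ≤ (dseg n.1 m.1 : ℝ) → ρ t ≤ ‖f k n - f k m‖)

namespace KaltonAux


def cnt (s : Finset ℕ) (t : ℕ) : ℤ := ((s ∩ Finset.range t).card : ℤ)

lemma cnt_zero (s : Finset ℕ) : cnt s 0 = 0 := by simp [cnt]

lemma cnt_succ (s : Finset ℕ) (t : ℕ) :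
    cnt s (t + 1) = cnt s t + (if t ∈ s then 1 else 0) := by
  unfold cnt
  rw [Finset.range_add_one, Finset.inter_comm, Finset.inter_comm s]
  by_cases h : t ∈ s
  · rw [Finset.insert_inter_of_mem h, Finset.card_insert_of_notMem (by simp), if_pos h]
    push_cast; ring
  · rw [Finset.insert_inter_of_notMem h, if_neg h]; ring

lemma cnt_eq_card (s : Finset ℕ) (t : ℕ) (h : s ⊆ Finset.range t) :
    cnt s t = s.card := by
  unfold cnt; rw [Finset.inter_eq_left.mpr h]

lemma cnt_nonneg (s : Finset ℕ) (t : ℕ) : 0 ≤ cnt s t := Int.natCast_nonneg _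

lemma cnt_le_card (s : Finset ℕ) (t : ℕ) : cnt s t ≤ s.card := by
  unfold cnt; exact_mod_cast Finset.card_le_card Finset.inter_subset_left

lemma card_inter_Icc (s : Finset ℕ) (a b : ℕ) (h : a ≤ b + 1) :
    ((s ∩ Finset.Icc a b).card : ℤ) = cnt s (b + 1) - cnt s a := by
  have h1 : s ∩ Finset.Icc a b = (s ∩ Finset.range (b+1)) \ (s ∩ Finset.range a) := by
    ext x
    simp only [Finset.mem_inter, Finset.mem_Icc, Finset.mem_sdiff, Finset.mem_range]
    by_cases hx : x ∈ s <;> simp [hx] <;> omega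
  have h2 : s ∩ Finset.range a ⊆ s ∩ Finset.range (b+1) := by
    intro x hx; simp only [Finset.mem_inter, Finset.mem_range] at *
    exact ⟨hx.1, by omega⟩
  rw [h1, Finset.card_sdiff_of_subset h2]
  unfold cnt
  rw [Nat.cast_sub (Finset.card_le_card h2)]

lemma term_le (n m : Finset ℕ) (a b : ℕ) :
    ((((n ∩ Finset.Icc a b).card : ℤ) - ((m ∩ Finset.Icc a b).card : ℤ)).natAbs)
      ≤ n.card + m.card := by
  have h1 : (n ∩ Finset.Icc a b).card ≤ n.card := Finset.card_le_card Finset.inter_subset_left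
  have h2 : (m ∩ Finset.Icc a b).card ≤ m.card := Finset.card_le_card Finset.inter_subset_left
  omega

lemma le_dseg (n m : Finset ℕ) (a b : ℕ) :
    (((n ∩ Finset.Icc a b).card : ℤ) - ((m ∩ Finset.Icc a b).card : ℤ)).natAbs ≤ dseg n m := by
  unfold dseg
  have hb : ∀ a : ℕ, BddAbove (Set.range fun b : ℕ =>
      (((n ∩ Finset.Icc a b).card : ℤ) - ((m ∩ Finset.Icc a b).card : ℤ)).natAbs) := by
    intro a
    refine ⟨n.card + m.card, ?_⟩
    rintro x ⟨b, rfl⟩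
    exact term_le n m a b
  have houter : BddAbove (Set.range fun a : ℕ => ⨆ b : ℕ,
      (((n ∩ Finset.Icc a b).card : ℤ) - ((m ∩ Finset.Icc a b).card : ℤ)).natAbs) := by
    refine ⟨n.card + m.card, ?_⟩
    rintro x ⟨a, rfl⟩
    exact ciSup_le fun b => term_le n m a b
  exact le_trans (le_ciSup (hb a) b) (le_ciSup houter a)

lemma dseg_le (n m : Finset ℕ) (D : ℕ)
    (H : ∀ a b : ℕ, a ≤ b →
      (((n ∩ Finset.Icc a b).card : ℤ) - ((m ∩ Finset.Icc a b).card : ℤ)).natAbs ≤ D) :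
    dseg n m ≤ D := by
  refine ciSup_le fun a => ciSup_le fun b => ?_
  rcases le_or_gt a b with h | h
  · exact H a b h
  · rw [Finset.Icc_eq_empty_of_lt h]
    simp

lemma dseg_self (n : Finset ℕ) : dseg n n = 0 := by
  have := dseg_le n n 0 (fun a b _ => by simp)
  omega

lemma dseg_comm (n m : Finset ℕ) : dseg n m = dseg m n := by
  unfold dseg
  refine iSup_congr fun a => iSup_congr fun b => ?_
  omega

lemma eq_of_dseg_zero (n m : Finset ℕ) (hc : n.card = m.card) (h : dseg n m = 0) : n = m := by
  by_contra hne
  have hsub : ¬ n ⊆ m := fun hs => hne (Finset.eq_of_subset_of_card_le hs (le_of_eq hc.symm))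
  obtain ⟨a, han, ham⟩ := Finset.not_subset.mp hsub
  have hle := le_dseg n m a a
  rw [Finset.Icc_self] at hle
  rw [Finset.inter_singleton_of_mem han, Finset.inter_singleton_of_notMem ham] at hle
  simp at hle
  omega

lemma dseg_pos_cases (n m : Finset ℕ) (hd : dseg n m ≠ 0) :
    (∃ t, 1 ≤ cnt n t - cnt m t) ∨ (∃ t, 1 ≤ cnt m t - cnt n t) := by
  by_contra H
  push_neg at H
  obtain ⟨H1, H2⟩ := H
  apply hd
  have := dseg_le n m 0 (fun a b hab => by
    rw [card_inter_Icc n a b (by omega), card_inter_Icc m a b (by omega)]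
    have h1 := H1 a; have h2 := H1 (b+1); have h3 := H2 a; have h4 := H2 (b+1)
    omega)
  omega


lemma key (n m : Finset ℕ) (hcard : n.card = m.card)
    (hA : ∃ t, 1 ≤ cnt n t - cnt m t) :
    ∃ p : Finset ℕ, p.card = n.card ∧ dseg n p ≤ 1 ∧
      (dseg p m : ℤ) ≤ (dseg n m : ℤ) - 1 := by
  classical
  obtain ⟨t₀, ht₀⟩ := hA
  set N : ℕ := max ((n.sup id) + 1) ((m.sup id) + 1) with hN
  have hnN : n ⊆ Finset.range N := by
    intro x hx
    have : x ≤ n.sup id := Finset.le_sup (f := id) hx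
    simp only [Finset.mem_range, hN]
    omega
  have hmN : m ⊆ Finset.range N := by
    intro x hx
    have : x ≤ m.sup id := Finset.le_sup (f := id) hx
    simp only [Finset.mem_range, hN]
    omega
  have hGbig : ∀ t, N ≤ t → cnt n t - cnt m t = 0 := by
    intro t ht
    rw [cnt_eq_card n t (hnN.trans (Finset.range_subset_range.mpr ht)),
        cnt_eq_card m t (hmN.trans (Finset.range_subset_range.mpr ht)), hcard]
    ring
  have hne : (Finset.range (N+1)).Nonempty := ⟨0, by simp⟩
  have hAex : ∃ A : ℤ, 1 ≤ A ∧ (∀ t, cnt n t - cnt m t ≤ A) ∧ (∃ t, cnt n t - cnt m t = A) := by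
    obtain ⟨tA, htAmem, htA⟩ := Finset.exists_mem_eq_sup' hne (fun t => cnt n t - cnt m t)
    have hub' : ∀ t, cnt n t - cnt m t ≤ cnt n tA - cnt m tA := by
      intro t
      rcases le_or_gt t N with h | h
      · have h2 := Finset.le_sup' (fun t => cnt n t - cnt m t)
          (Finset.mem_range.mpr (show t < N+1 by omega))
        rwa [htA] at h2
      · rw [hGbig t (by omega)]
        have h2 := Finset.le_sup' (fun t => cnt n t - cnt m t)
          (Finset.mem_range.mpr (show 0 < N+1 by omega))
        rw [htA, cnt_zero, cnt_zero] at h2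
        omega
    exact ⟨cnt n tA - cnt m tA, le_trans ht₀ (hub' t₀), hub', tA, rfl⟩
  obtain ⟨A, hA1, hub, tA, htA⟩ := hAex
  have hBex : ∃ B : ℤ, 0 ≤ B ∧ (∀ t, cnt m t - cnt n t ≤ B) ∧ (∃ t, cnt m t - cnt n t = B) := by
    obtain ⟨tB, htBmem, htB⟩ := Finset.exists_mem_eq_sup' hne (fun t => cnt m t - cnt n t)
    have hub' : ∀ t, cnt m t - cnt n t ≤ cnt m tB - cnt n tB := by
      intro t
      rcases le_or_gt t N with h | h
      · have h2 := Finset.le_sup' (fun t => cnt m t - cnt n t)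
          (Finset.mem_range.mpr (show t < N+1 by omega))
        rwa [htB] at h2
      · have h0 := hGbig t (by omega)
        have h2 := Finset.le_sup' (fun t => cnt m t - cnt n t)
          (Finset.mem_range.mpr (show 0 < N+1 by omega))
        rw [htB, cnt_zero, cnt_zero] at h2
        omega
    have h0 : (0:ℤ) ≤ cnt m tB - cnt n tB := by
      have := hub' 0
      rw [cnt_zero, cnt_zero] at this
      omega
    exact ⟨cnt m tB - cnt n tB, h0, hub', tB, rfl⟩
  obtain ⟨B, hB0, hubB, tB, htB⟩ := hBex
  -- A + B ≤ dseg n m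
  have hterm : ∀ s t : ℕ, s < t →
      ((cnt n t - cnt m t) - (cnt n s - cnt m s)).natAbs ≤ dseg n m := by
    intro s t hst
    have h := le_dseg n m s (t-1)
    rw [card_inter_Icc n s (t-1) (by omega), card_inter_Icc m s (t-1) (by omega)] at h
    have ht' : t - 1 + 1 = t := by omega
    rw [ht'] at h
    have he : (cnt n t - cnt n s) - (cnt m t - cnt m s)
        = (cnt n t - cnt m t) - (cnt n s - cnt m s) := by ring
    rwa [he] at h
  have htne : tA ≠ tB := by
    intro h; subst h; omega
  have hAB : A + B ≤ (dseg n m : ℤ) := by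
    rcases htne.lt_or_gt with h | h
    · have := hterm tA tB h; omega
    · have := hterm tB tA h; omega
  -- the shift function
  obtain ⟨hf, hfspec⟩ : ∃ hf : ℕ → ℤ,
      ∀ t, (cnt n t - cnt m t = A ∧ hf t = 1) ∨ (¬ cnt n t - cnt m t = A ∧ hf t = 0) := by
    refine ⟨fun t => if cnt n t - cnt m t = A then 1 else 0, fun t => ?_⟩
    by_cases h : cnt n t - cnt m t = A <;> simp [h]
  -- the new set p
  set p : Finset ℕ := (Finset.range N).filter (fun t =>
      (t ∈ n ∧ ¬(cnt n (t+1) - cnt m (t+1) = A ∧ ¬ cnt n t - cnt m t = A)) ∨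
      (t ∉ n ∧ (cnt n t - cnt m t = A) ∧ ¬ cnt n (t+1) - cnt m (t+1) = A)) with hpdef
  have hmemp : ∀ t, t ∈ p ↔
      ((t ∈ n ∧ ¬(cnt n (t+1) - cnt m (t+1) = A ∧ ¬ cnt n t - cnt m t = A)) ∨
       (t ∉ n ∧ (cnt n t - cnt m t = A) ∧ ¬ cnt n (t+1) - cnt m (t+1) = A)) := by
    intro t
    rw [hpdef]
    simp only [Finset.mem_filter, Finset.mem_range]
    constructor
    · exact fun h => h.2
    · intro H
      refine ⟨?_, H⟩
      rcases H with ⟨h1, _⟩ | ⟨_, h3, _⟩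
      · exact Finset.mem_range.mp (hnN h1)
      · by_contra hc
        rw [hGbig t (by omega)] at h3
        omega
  have hpsub : p ⊆ Finset.range N := by rw [hpdef]; exact Finset.filter_subset _ _
  have hcnt : ∀ t, cnt p t = cnt n t - hf t := by
    intro t
    induction t with
    | zero =>
      have h0 : cnt n 0 - cnt m 0 = 0 := by rw [cnt_zero, cnt_zero]; ring
      rcases hfspec 0 with ⟨e, f⟩ | ⟨e, f⟩ <;> rw [cnt_zero, cnt_zero, f] <;> omega
    | succ t ih =>
      rw [cnt_succ p t, cnt_succ n t, ih]
      have hjump : cnt n (t+1) - cnt m (t+1)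
          = (cnt n t - cnt m t) + (if t ∈ n then 1 else 0) - (if t ∈ m then 1 else 0) := by
        rw [cnt_succ n t, cnt_succ m t]; ring
      have hu1 := hub t
      have hu2 := hub (t+1)
      have hs1 := hfspec t
      have hs2 := hfspec (t+1)
      rw [show (if t ∈ p then (1:ℤ) else 0)
          = (if ((t ∈ n ∧ ¬(cnt n (t+1) - cnt m (t+1) = A ∧ ¬ cnt n t - cnt m t = A)) ∨
              (t ∉ n ∧ (cnt n t - cnt m t = A) ∧ ¬ cnt n (t+1) - cnt m (t+1) = A)) then 1 else 0)
        from by simp only [hmemp t]]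
      by_cases h1 : t ∈ n <;> by_cases h2 : t ∈ m <;>
        by_cases h3 : cnt n t - cnt m t = A <;>
        by_cases h4 : cnt n (t+1) - cnt m (t+1) = A <;>
        simp only [h1, h2, h3, h4, if_true, if_false, ite_true, ite_false, not_true,
          not_false_iff, true_and, false_and, and_true, and_false, true_or, false_or,
          or_false, or_true, not_not, if_pos, if_neg] at hjump ⊢ <;>
        omega
  have hfN : hf N = 0 := by
    have h0 := hGbig N le_rfl
    rcases hfspec N with ⟨e, f⟩ | ⟨e, f⟩ <;> omega
  have hcardp : p.card = n.card := by
    have h1 := hcnt N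
    rw [cnt_eq_card p N hpsub, cnt_eq_card n N hnN, hfN] at h1
    omega
  refine ⟨p, hcardp, ?_, ?_⟩
  · apply dseg_le
    intro a b hab
    rw [card_inter_Icc n a b (by omega), card_inter_Icc p a b (by omega)]
    have e1 := hcnt a; have e2 := hcnt (b+1)
    have f1 := hfspec a; have f2 := hfspec (b+1)
    omega
  · have hd1 : (1:ℤ) ≤ (dseg n m : ℤ) := by omega
    have hle : dseg p m ≤ dseg n m - 1 := by
      apply dseg_le
      intro a b hab
      rw [card_inter_Icc p a b (by omega), card_inter_Icc m a b (by omega)]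
      have e1 := hcnt a; have e2 := hcnt (b+1)
      have f1 := hfspec a; have f2 := hfspec (b+1)
      have g1 := hub a; have g2 := hub (b+1)
      have g3 := hubB a; have g4 := hubB (b+1)
      omega
    omega


lemma lip_bound {X : Type*} [NormedAddCommGroup X] [NormedSpace ℝ X] (k : ℕ)
    (f : Vk k → X) (w : ℝ) (hw : 0 ≤ w)
    (h1 : ∀ n m : Vk k, dseg n.1 m.1 ≤ 1 → ‖f n - f m‖ ≤ w) :
    ∀ n m : Vk k, ‖f n - f m‖ ≤ w * dseg n.1 m.1 := by
  suffices H : ∀ d : ℕ, ∀ n m : Vk k, dseg n.1 m.1 = d → ‖f n - f m‖ ≤ w * d by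
    intro n m; exact H _ n m rfl
  intro d
  induction d using Nat.strong_induction_on with
  | _ d IH =>
    intro n m hd
    rcases Nat.eq_zero_or_pos d with h0 | hpos
    · subst h0
      have hnm : n = m := Subtype.ext (eq_of_dseg_zero _ _ (n.2.trans m.2.symm) hd)
      simp [hnm]
    · have hne : dseg n.1 m.1 ≠ 0 := by omega
      rcases dseg_pos_cases _ _ hne with hc | hc
      · obtain ⟨p, hpcard, hp1, hp2⟩ := key n.1 m.1 (by rw [n.2, m.2]) hc
        have hPk : p.card = k := by rw [hpcard, n.2]
        set P : Vk k := ⟨p, hPk⟩ with hP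
        have e1 : ‖f n - f P‖ ≤ w := h1 n P hp1
        have hlt : dseg p m.1 < d := by omega
        have e2 : ‖f P - f m‖ ≤ w * dseg p m.1 := IH (dseg p m.1) hlt P m rfl
        have hcast : (dseg p m.1 : ℝ) ≤ (d : ℝ) - 1 := by
          have : dseg p m.1 + 1 ≤ d := by omega
          have := (Nat.cast_le (α := ℝ)).mpr this
          push_cast at this
          linarith
        calc ‖f n - f m‖ ≤ ‖f n - f P‖ + ‖f P - f m‖ := by
              have := norm_sub_le_norm_sub_add_norm_sub (f n) (f P) (f m)
              exact this
          _ ≤ w + w * ((d : ℝ) - 1) := by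
              have := mul_le_mul_of_nonneg_left hcast hw
              linarith
          _ = w * d := by ring
      · obtain ⟨q, hqcard, hq1, hq2⟩ := key m.1 n.1 (by rw [n.2, m.2]) hc
        have hQk : q.card = k := by rw [hqcard, m.2]
        set Q : Vk k := ⟨q, hQk⟩ with hQ
        have e1 : ‖f Q - f m‖ ≤ w := by
          apply h1
          show dseg q m.1 ≤ 1
          rw [dseg_comm]
          exact hq1
        have hqn : dseg q n.1 < d := by
          have := dseg_comm m.1 n.1
          omega
        have e2 : ‖f n - f Q‖ ≤ w * dseg n.1 q := by
          have := IH (dseg n.1 q) (by rw [dseg_comm]; omega) n Q rfl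
          exact this
        have hcast : (dseg n.1 q : ℝ) ≤ (d : ℝ) - 1 := by
          have h3 : dseg n.1 q + 1 ≤ d := by rw [dseg_comm]; omega
          have := (Nat.cast_le (α := ℝ)).mpr h3
          push_cast at this
          linarith
        calc ‖f n - f m‖ ≤ ‖f n - f Q‖ + ‖f Q - f m‖ :=
              norm_sub_le_norm_sub_add_norm_sub (f n) (f Q) (f m)
          _ ≤ w * ((d : ℝ) - 1) + w := by
              have := mul_le_mul_of_nonneg_left hcast hw
              linarith
          _ = w * d := by ring


end KaltonAux


open KaltonAux

/-- If a Banach space `X` has property `Q`, then the family of interlaced graphs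
`([ℕ]^k, d_K)`, `k ∈ ℕ`, does not equi-coarsely embed into `X`. -/
theorem propertyQ_implies_no_equicoarse_embedding
    (X : Type*) [NormedAddCommGroup X] [NormedSpace ℝ X] [CompleteSpace X]
    (hQ : PropertyQ X) : ¬ EquiCoarseKalton X := by
  rintro ⟨ρ, ω, f, hρ, hub, hlb⟩
  obtain ⟨C, hC1, hC⟩ := hQ
  have hw : 0 ≤ ω 1 := by
    have h := hub 0 ⟨∅, rfl⟩ ⟨∅, rfl⟩ 1 (by rw [dseg_self]; norm_num)
    have h2 := norm_nonneg (f 0 ⟨∅, rfl⟩ - f 0 ⟨∅, rfl⟩)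
    linarith
  have hbound : ∀ k : ℕ, ρ k ≤ C * ω 1 := by
    intro k
    have hlip : ∀ n m : Vk k, ‖f k n - f k m‖ ≤ ω 1 * dseg n.1 m.1 :=
      lip_bound k (f k) (ω 1) hw (fun n m h =>
        hub k n m 1 (by exact_mod_cast h))
    obtain ⟨M, hMinf, hM⟩ := hC k (f k) (ω 1) hw hlip
    obtain ⟨T, hTM, hTcard⟩ := hMinf.exists_subset_card_eq k
    set b := T.sup id with hb
    have hM2 : (M \ Set.Iic b).Infinite := hMinf.diff (Set.finite_Iic b)
    obtain ⟨T', hT'M, hT'card⟩ := hM2.exists_subset_card_eq k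
    have hT'M' : ↑T' ⊆ M := hT'M.trans Set.diff_subset
    have hdk : k ≤ dseg T T' := by
      have h := le_dseg T T' 0 b
      have e1 : T ∩ Finset.Icc 0 b = T := by
        apply Finset.inter_eq_left.mpr
        intro x hx
        exact Finset.mem_Icc.mpr ⟨Nat.zero_le _, Finset.le_sup (f := id) hx⟩
      have e2 : T' ∩ Finset.Icc 0 b = ∅ := by
        apply Finset.eq_empty_iff_forall_notMem.mpr
        intro x hx
        rw [Finset.mem_inter, Finset.mem_Icc] at hx
        have := hT'M hx.1
        simp only [Set.mem_diff, Set.mem_Iic] at this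
        exact this.2 hx.2.2
      rw [e1, e2] at h
      simp only [Finset.card_empty, Nat.cast_zero, sub_zero, Int.natAbs_natCast, hTcard] at h
      omega
    have h1 := hlb k ⟨T, hTcard⟩ ⟨T', hT'card⟩ k (by exact_mod_cast hdk)
    have h2 := hM ⟨T, hTcard⟩ ⟨T', hT'card⟩ hTM hT'M'
    linarith
  obtain ⟨x₀, hx₀⟩ := Filter.eventually_atTop.mp (hρ.eventually_gt_atTop (C * ω 1))
  have h1 := hbound ⌈x₀⌉₊
  have h2 := hx₀ (⌈x₀⌉₊ : ℝ) (Nat.le_ceil x₀)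
  linarith
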